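/- arXiv:2604.26906 — 3 statements merged into one kernel-verified Lean document; each statement's English description precedes it below -/
import Mathlib

section
/- Let θ ∈ (0, π/2), ω ∈ [0, π], and A ∈ [0, π/2 − θ/2], and suppose cos A = cos(θ/2) sin θ + sin(θ/2) cos θ cos ω. Then cos(A + θ/2) ≥ (1/2) sin θ cos θ (1 + cos ω). If moreover θ ∈ (π/4, π/2) and ω ≤ 3π/4, then, writing β := π/2 − θ, one has cos(A + θ/2) ≥ 0.05 sin β and π/2 − θ/2 − A ≥ 0.05 sin β. -/
open Real

set_option maxHeartbeats 1000000 in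
/-- Trigonometric inequality used in the intermediate cone lemma: if
`cos A = cos(θ/2) sin θ + sin(θ/2) cos θ cos ω` with `θ ∈ (0,π/2)`, `ω ∈ [0,π]`,
`A ∈ [0, π/2 − θ/2]`, then `cos(A + θ/2) ≥ (1/2) sin θ cos θ (1 + cos ω)`; and if
moreover `θ ∈ (π/4, π/2)` and `ω ≤ 3π/4`, then, with `β := π/2 − θ`,
`cos(A + θ/2) ≥ 0.05 sin β` and `π/2 − θ/2 − A ≥ 0.05 sin β`. -/
theorem trig_cone_gain (θ ω A : ℝ)
    (hθ : θ ∈ Set.Ioo 0 (π / 2)) (hω : ω ∈ Set.Icc 0 π)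
    (hA : A ∈ Set.Icc 0 (π / 2 - θ / 2))
    (h : Real.cos A = Real.cos (θ / 2) * Real.sin θ
        + Real.sin (θ / 2) * Real.cos θ * Real.cos ω) :
    (1 / 2) * Real.sin θ * Real.cos θ * (1 + Real.cos ω) ≤ Real.cos (A + θ / 2) ∧
    (θ ∈ Set.Ioo (π / 4) (π / 2) → ω ≤ 3 * π / 4 →
      0.05 * Real.sin (π / 2 - θ) ≤ Real.cos (A + θ / 2) ∧
      0.05 * Real.sin (π / 2 - θ) ≤ π / 2 - θ / 2 - A) := by
  obtain ⟨hθ0, hθ2⟩ := hθ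
  obtain ⟨hA0, hA1⟩ := hA
  have hpi := Real.pi_pos
  have hs : 0 < Real.sin (θ / 2) := by
    apply Real.sin_pos_of_pos_of_lt_pi <;> linarith
  have hsinA : Real.sin A ≤ Real.cos (θ / 2) := by
    rw [← Real.sin_pi_div_two_sub]
    exact Real.sin_le_sin_of_le_of_le_pi_div_two (by linarith) (by linarith) (by linarith)
  have hsc : Real.sin (θ / 2) ^ 2 + Real.cos (θ / 2) ^ 2 = 1 := Real.sin_sq_add_cos_sq _
  have hsθ : Real.sin θ = 2 * Real.sin (θ / 2) * Real.cos (θ / 2) := by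
    have h3 := Real.sin_two_mul (θ / 2)
    rw [show 2 * (θ / 2) = θ by ring] at h3
    linarith
  have hcθ : Real.cos θ = Real.cos (θ / 2) ^ 2 - Real.sin (θ / 2) ^ 2 := by
    have h2 := Real.cos_two_mul (θ / 2)
    rw [show 2 * (θ / 2) = θ by ring] at h2
    linarith
  have key : (1 / 2) * Real.sin θ * Real.cos θ * (1 + Real.cos ω) ≤ Real.cos (A + θ / 2) := by
    rw [Real.cos_add, h, hsθ, hcθ]
    have hid : (Real.cos (θ / 2) * (2 * Real.sin (θ / 2) * Real.cos (θ / 2))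
          + Real.sin (θ / 2) * (Real.cos (θ / 2) ^ 2 - Real.sin (θ / 2) ^ 2) * Real.cos ω)
          * Real.cos (θ / 2) - Real.sin A * Real.sin (θ / 2)
        - 1 / 2 * (2 * Real.sin (θ / 2) * Real.cos (θ / 2))
          * (Real.cos (θ / 2) ^ 2 - Real.sin (θ / 2) ^ 2) * (1 + Real.cos ω)
        = Real.sin (θ / 2) * (Real.cos (θ / 2) - Real.sin A) := by
      linear_combination (Real.sin (θ / 2) * Real.cos (θ / 2)) * hsc
    nlinarith [mul_nonneg hs.le (sub_nonneg.2 hsinA), hid]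
  refine ⟨key, fun hθ' hω' => ?_⟩
  obtain ⟨hθ4, _⟩ := hθ'
  have hsinθ : Real.sin (π / 4) ≤ Real.sin θ :=
    Real.sin_le_sin_of_le_of_le_pi_div_two (by linarith) (by linarith) (by linarith)
  rw [Real.sin_pi_div_four] at hsinθ
  have hcosω : Real.cos (3 * π / 4) ≤ Real.cos ω :=
    Real.cos_le_cos_of_nonneg_of_le_pi hω.1 (by linarith) hω'
  have h34 : Real.cos (3 * π / 4) = -(Real.sqrt 2 / 2) := by
    have : (3 : ℝ) * π / 4 = π - π / 4 := by ring
    rw [this, Real.cos_pi_sub, Real.cos_pi_div_four]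
  rw [h34] at hcosω
  have hcosθ : 0 < Real.cos θ := Real.cos_pos_of_mem_Ioo ⟨by linarith, hθ2⟩
  have hsqrt2 : (1.414 : ℝ) ≤ Real.sqrt 2 ∧ Real.sqrt 2 ≤ 1.415 := by
    constructor
    · nlinarith [Real.sq_sqrt (by norm_num : (2:ℝ) ≥ 0), Real.sqrt_nonneg 2]
    · nlinarith [Real.sq_sqrt (by norm_num : (2:ℝ) ≥ 0), Real.sqrt_nonneg 2]
  have e1 : (0.707 : ℝ) ≤ Real.sin θ := by linarith [hsqrt2.1]
  have e2 : (0.29 : ℝ) ≤ 1 + Real.cos ω := by linarith [hsqrt2.2]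
  have h5 : (0.05 : ℝ) ≤ (1 / 2) * Real.sin θ * (1 + Real.cos ω) := by
    nlinarith [mul_nonneg (show (0:ℝ) ≤ Real.sin θ - 0.707 by linarith)
      (show (0:ℝ) ≤ 1 + Real.cos ω - 0.29 by linarith)]
  have hstep : (0.05 : ℝ) * Real.cos θ ≤
      (1 / 2) * Real.sin θ * Real.cos θ * (1 + Real.cos ω) := by
    calc (0.05 : ℝ) * Real.cos θ
        ≤ (1 / 2 * Real.sin θ * (1 + Real.cos ω)) * Real.cos θ :=
          mul_le_mul_of_nonneg_right h5 hcosθ.le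
      _ = (1 / 2) * Real.sin θ * Real.cos θ * (1 + Real.cos ω) := by ring
  have hβ : Real.sin (π / 2 - θ) = Real.cos θ := Real.sin_pi_div_two_sub θ
  have h1 : (0.05 : ℝ) * Real.sin (π / 2 - θ) ≤ Real.cos (A + θ / 2) := by
    rw [hβ]; exact le_trans hstep key
  refine ⟨h1, ?_⟩
  have hD : Real.cos (A + θ / 2) = Real.sin (π / 2 - θ / 2 - A) := by
    rw [← Real.cos_pi_div_two_sub]; ring_nf
  have := Real.sin_le (show (0:ℝ) ≤ π / 2 - θ / 2 - A by linarith)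
  rw [hD] at h1
  linarith
end

section
/- Let V be a real inner product space, let μ and ν be nonzero vectors in V and e a nonzero vector in V, and let θ₀ ∈ (0, π/2] and θ₁ ∈ [π/4 + θ₀/2, π/2]. If ⟨e, μ⟩ ≤ π/2 − θ₁ and ⟨e, ν⟩ ≤ θ₀, then ⟨μ, ν⟩ ≤ (1/2)⟨e, ν⟩ + π/4; equivalently, π/2 − ⟨μ, ν⟩ ≥ (1/2)(π/2 − ⟨e, ν⟩). -/
open Real InnerProductGeometry

section Aux
open RealInnerProductSpace

private lemma angle_triangle_unit {V : Type*} [NormedAddCommGroup V] [InnerProductSpace ℝ V]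
    (x y z : V) (hx : ‖x‖ = 1) (hy : ‖y‖ = 1) (hz : ‖z‖ = 1) :
    angle x z ≤ angle x y + angle y z := by
  set a := angle x y with ha
  set b := angle y z with hb
  by_cases hab : π ≤ a + b
  · exact (angle_le_pi x z).trans hab
  push_neg at hab
  have ha0 : 0 ≤ a := angle_nonneg x y
  have hb0 : 0 ≤ b := angle_nonneg y z
  -- cosines as inner products
  have hca : Real.cos a = ⟪x, y⟫ := by
    rw [ha, InnerProductGeometry.cos_angle, hx, hy]; simp
  have hcb : Real.cos b = ⟪y, z⟫ := by
    rw [hb, InnerProductGeometry.cos_angle, hy, hz]; simp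
  -- orthogonal components
  set x' := x - ⟪x, y⟫ • y with hx'
  set z' := z - ⟪y, z⟫ • y with hz'
  have hyy : ⟪y, y⟫ = (1 : ℝ) := by
    rw [real_inner_self_eq_norm_mul_norm, hy]; ring
  have hnx' : ‖x'‖ ^ 2 = 1 - ⟪x, y⟫ ^ 2 := by
    rw [hx', ← real_inner_self_eq_norm_sq]
    simp only [inner_sub_sub_self, real_inner_smul_left, real_inner_smul_right, hyy]
    rw [real_inner_self_eq_norm_mul_norm, hx, real_inner_comm y x]
    ring
  have hnz' : ‖z'‖ ^ 2 = 1 - ⟪y, z⟫ ^ 2 := by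
    rw [hz', ← real_inner_self_eq_norm_sq]
    simp only [inner_sub_sub_self, real_inner_smul_left, real_inner_smul_right, hyy]
    rw [real_inner_self_eq_norm_mul_norm, hz, real_inner_comm z y]
    ring
  have hsa : Real.sin a = ‖x'‖ := by
    have h1 : Real.sin a ^ 2 = ‖x'‖ ^ 2 := by
      rw [hnx', ← hca, Real.sin_sq_eq_half_sub, Real.cos_sq]
      ring
    have := Real.sin_nonneg_of_nonneg_of_le_pi ha0 (angle_le_pi x y)
    nlinarith [norm_nonneg x']
  have hsb : Real.sin b = ‖z'‖ := by
    have h1 : Real.sin b ^ 2 = ‖z'‖ ^ 2 := by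
      rw [hnz', ← hcb, Real.sin_sq_eq_half_sub, Real.cos_sq]
      ring
    have := Real.sin_nonneg_of_nonneg_of_le_pi hb0 (angle_le_pi y z)
    nlinarith [norm_nonneg z']
  have hinner : ⟪x', z'⟫ = ⟪x, z⟫ - ⟪x, y⟫ * ⟪y, z⟫ := by
    simp only [hx', hz', inner_sub_left, inner_sub_right, real_inner_smul_left,
      real_inner_smul_right, hyy, real_inner_comm y x]
    ring
  have hcs : -(‖x'‖ * ‖z'‖) ≤ ⟪x', z'⟫ := by
    have := abs_real_inner_le_norm x' z'
    rw [abs_le] at this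
    exact this.1
  have hkey : Real.cos (a + b) ≤ Real.cos (angle x z) := by
    rw [Real.cos_add, hsa, hsb, hca, hcb, InnerProductGeometry.cos_angle, hx, hz]
    simp only [one_mul, div_one]
    linarith [hcs, hinner.symm.le]
  by_contra hc
  push_neg at hc
  have := Real.strictAntiOn_cos ⟨by positivity, hab.le⟩
    ⟨angle_nonneg x z, angle_le_pi x z⟩ hc
  linarith

private lemma angle_triangle' {V : Type*} [NormedAddCommGroup V] [InnerProductSpace ℝ V]
    (x y z : V) (hx : x ≠ 0) (hy : y ≠ 0) (hz : z ≠ 0) :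
    angle x z ≤ angle x y + angle y z := by
  have nx : (0:ℝ) < ‖x‖ := norm_pos_iff.mpr hx
  have ny : (0:ℝ) < ‖y‖ := norm_pos_iff.mpr hy
  have nz : (0:ℝ) < ‖z‖ := norm_pos_iff.mpr hz
  have hux : ‖(‖x‖⁻¹ • x)‖ = 1 := by rw [norm_smul, norm_inv, norm_norm, inv_mul_cancel₀ nx.ne']
  have huy : ‖(‖y‖⁻¹ • y)‖ = 1 := by rw [norm_smul, norm_inv, norm_norm, inv_mul_cancel₀ ny.ne']
  have huz : ‖(‖z‖⁻¹ • z)‖ = 1 := by rw [norm_smul, norm_inv, norm_norm, inv_mul_cancel₀ nz.ne']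
  have h := angle_triangle_unit (‖x‖⁻¹ • x) (‖y‖⁻¹ • y) (‖z‖⁻¹ • z) hux huy huz
  simpa only [angle_smul_left_of_pos _ _ (inv_pos.mpr nx),
    angle_smul_right_of_pos _ _ (inv_pos.mpr ny),
    angle_smul_left_of_pos _ _ (inv_pos.mpr ny),
    angle_smul_right_of_pos _ _ (inv_pos.mpr nz)] using h

end Aux

/-- If the angle between `e` and `μ` is at most `π/2 − θ₁` and the angle between `e` and `ν`
is at most `θ₀`, with `θ₀ ∈ (0,π/2]` and `θ₁ ∈ [π/4 + θ₀/2, π/2]`, then the angle between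
`μ` and `ν` is at most `(1/2)⟨e,ν⟩ + π/4`; equivalently
`π/2 − ⟨μ,ν⟩ ≥ (1/2)(π/2 − ⟨e,ν⟩)`. -/
theorem angle_half_gain {V : Type*} [NormedAddCommGroup V] [InnerProductSpace ℝ V]
    (μ ν e : V) (hμ : μ ≠ 0) (hν : ν ≠ 0) (he : e ≠ 0)
    (θ₀ θ₁ : ℝ) (hθ₀ : θ₀ ∈ Set.Ioc 0 (π / 2))
    (hθ₁ : θ₁ ∈ Set.Icc (π / 4 + θ₀ / 2) (π / 2))
    (h1 : angle e μ ≤ π / 2 - θ₁) (h2 : angle e ν ≤ θ₀) :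
    angle μ ν ≤ (1 / 2) * angle e ν + π / 4 ∧
      (1 / 2) * (π / 2 - angle e ν) ≤ π / 2 - angle μ ν := by
  have htri : angle μ ν ≤ angle μ e + angle e ν := angle_triangle' μ e ν hμ he hν
  have hcomm : angle μ e = angle e μ := angle_comm μ e
  obtain ⟨hθ₀l, hθ₀r⟩ := hθ₀
  obtain ⟨hθ₁l, hθ₁r⟩ := hθ₁
  constructor <;> linarith
end

section
/- Let c > 0 and let (δ_n)_{n≥0} be a sequence of nonnegative real numbers with c·δ₀ ≤ 1 and δ_{n+1} ≤ δ_n(1 − c·δ_n) for all n ≥ 0. Then δ_n ≤ 1/(c·n) for all n ≥ 1. -/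
/-- If `c·δ₀ ≤ 1`, `δ_n ≥ 0` and `δ_{n+1} ≤ δ_n(1 − c·δ_n)` for all `n`,
then `δ_n ≤ 1/(c·n)` for all `n ≥ 1`. -/
theorem seq_decay (c : ℝ) (hc : 0 < c) (δ : ℕ → ℝ)
    (hnonneg : ∀ n, 0 ≤ δ n) (h0 : c * δ 0 ≤ 1)
    (hrec : ∀ n, δ (n + 1) ≤ δ n * (1 - c * δ n)) :
    ∀ n : ℕ, 1 ≤ n → δ n ≤ 1 / (c * n) := by
  intro n hn
  induction n, hn using Nat.le_induction with
  | base =>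
    have h := hrec 0
    have h1 := hnonneg 0
    rw [Nat.cast_one, mul_one, le_div_iff₀ hc]
    nlinarith [sq_nonneg (2 * c * δ 0 - 1)]
  | succ n hn ih =>
    have hr := hrec n
    have hd := hnonneg n
    have hn' : (1 : ℝ) ≤ (n : ℝ) := by exact_mod_cast hn
    have hcn : (0 : ℝ) < c * n := by positivity
    have hcn1 : (0 : ℝ) < c * ((n : ℕ) + 1 : ℕ) := by positivity
    rw [le_div_iff₀ hcn] at ih
    rw [le_div_iff₀ hcn1]
    push_cast
    rcases eq_or_lt_of_le hn with h1 | h2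
    · -- n = 1
      have hne : n = 1 := h1.symm
      subst hne
      push_cast at ih ⊢
      nlinarith [sq_nonneg (2 * c * δ 1 - 1)]
    · have hn2 : (2 : ℝ) ≤ (n : ℝ) := by exact_mod_cast h2
      have ha : 0 ≤ 1 - c * δ n := by nlinarith
      have hb : 0 ≤ 1 - c * (n : ℝ) * δ n := by nlinarith
      nlinarith [mul_nonneg hb ha, sq_nonneg (c * δ n), mul_nonneg hd hd]
end
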